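/- arXiv:2106.11675 — 3 statements merged into one kernel-verified Lean document; each statement's English description precedes it below -/
import Mathlib

section
/- Let G be a finite simple graph and let (C,F) be an antler in G. Then fvs(G) = |C| + fvs(G − (C ∪ F)). -/
variable {V : Type*}

/-- The subgraph of `G` with edges restricted to the vertex set `S`
(kept on the same vertex type; vertices outside `S` become isolated).
Used to model the induced subgraph `G[S]` and vertex deletion `G - X = G[Xᶜ]`. -/
def graphRestrict (G : SimpleGraph V) (S : Set V) : SimpleGraph V where
  Adj u v := G.Adj u v ∧ u ∈ S ∧ v ∈ S
  symm := ⟨fun _ _ h => ⟨h.1.symm, h.2.2, h.2.1⟩⟩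
  loopless := ⟨fun v h => G.loopless.irrefl v h.1⟩

/-- `X` is a feedback vertex set of `G`: deleting `X` leaves an acyclic graph. -/
def IsFVS (G : SimpleGraph V) (X : Set V) : Prop :=
  (graphRestrict G Xᶜ).IsAcyclic

/-- The feedback vertex number of `G`: the minimum size of a feedback vertex set. -/
noncomputable def fvs (G : SimpleGraph V) : ℕ :=
  sInf {n | ∃ X : Set V, IsFVS G X ∧ X.ncard = n}

/-- `X` is a minimum feedback vertex set of `G`. -/
def IsMinFVS (G : SimpleGraph V) (X : Set V) : Prop :=
  IsFVS G X ∧ ∀ Y : Set V, IsFVS G Y → X.ncard ≤ Y.ncard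

/-- `(C, F)` is a feedback vertex cut in `G`: `C` and `F` are disjoint, `G[F]` is a
forest, and every tree of `G[F]` has at most one edge to `V(G) \ (C ∪ F)` (i.e. any two
edges from the same component of `G[F]` to the outside coincide). -/
def IsFVC (G : SimpleGraph V) (C F : Set V) : Prop :=
  Disjoint C F ∧ (graphRestrict G F).IsAcyclic ∧
    ∀ u₁ u₂ w₁ w₂ : V, u₁ ∈ F → u₂ ∈ F →
      (graphRestrict G F).Reachable u₁ u₂ →
      w₁ ∉ C ∪ F → w₂ ∉ C ∪ F → G.Adj u₁ w₁ → G.Adj u₂ w₂ →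
      u₁ = u₂ ∧ w₁ = w₂

/-- `(C, F)` is an antler in `G`: a feedback vertex cut with `|C| ≤ fvs(G[C ∪ F])`. -/
def IsAntler (G : SimpleGraph V) (C F : Set V) : Prop :=
  IsFVC G C F ∧ C.ncard ≤ fvs (graphRestrict G (C ∪ F))

/-- A graph `H` together with a vertex set `C` "has order `z`" if every connected
component `H'` of `H` satisfies `fvs(H') = |C ∩ V(H')| ≤ z`. -/
def HasCertOrder {W : Type*} (H : SimpleGraph W) (C : Set W) (z : ℕ) : Prop :=
  ∀ v : W,
    fvs (graphRestrict H {u | H.Reachable u v}) = (C ∩ {u | H.Reachable u v}).ncard ∧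
    (C ∩ {u | H.Reachable u v}).ncard ≤ z

/-- `H` is a `C`-certificate in `G`: a subgraph of `G` for which `C` is a minimum
feedback vertex set. -/
def IsCCertificate (G : SimpleGraph V) (C : Set V) (H : G.Subgraph) : Prop :=
  C ⊆ H.verts ∧ IsMinFVS H.coe {u : H.verts | (u : V) ∈ C}

/-- `H` is a `C`-certificate of order `z` in `G`. -/
def IsCCertificateOfOrder (G : SimpleGraph V) (C : Set V) (H : G.Subgraph) (z : ℕ) : Prop :=
  IsCCertificate G C H ∧ HasCertOrder H.coe {u : H.verts | (u : V) ∈ C} z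

/-- `(C, F)` is a `z`-antler in `G`: an antler such that `G[C ∪ F]` contains a
`C`-certificate of order `z`. -/
def IsZAntler (G : SimpleGraph V) (z : ℕ) (C F : Set V) : Prop :=
  IsAntler G C F ∧ ∃ H : G.Subgraph, H.verts ⊆ C ∪ F ∧ IsCCertificateOfOrder G C H z

/-- The function `f_r(x) = 2x³ + 3x² - x`. -/
def fr (x : ℕ) : ℕ := 2 * x ^ 3 + 3 * x ^ 2 - x

/-- A feedback vertex cut `(C, F)` is reducible if `|F| > f_r(|C|)`. -/
def IsReducibleFVC (G : SimpleGraph V) (C F : Set V) : Prop :=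
  IsFVC G C F ∧ fr C.ncard < F.ncard

/-- A feedback vertex cut `(C, F)` is simple if `|F| ≤ 2 f_r(|C|)` and either
`G[F]` is connected, or all trees of `G[F]` have a common neighbor `v` and there is a
single-tree feedback vertex cut `(C, F₂)` with `v ∈ F₂ \ F` and `F ⊆ F₂`. -/
def IsSimpleFVC (G : SimpleGraph V) (C F : Set V) : Prop :=
  IsFVC G C F ∧ F.ncard ≤ 2 * fr C.ncard ∧
    ((G.induce F).Connected ∨
      ∃ v : V,
        (∀ u ∈ F, ∃ u' ∈ F, (graphRestrict G F).Reachable u u' ∧ G.Adj u' v) ∧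
        ∃ F₂ : Set V, IsFVC G C F₂ ∧ (G.induce F₂).Connected ∧ v ∈ F₂ \ F ∧ F ⊆ F₂)

/-- `G` contains a `v`-flower of order `k`: `k` cycles whose vertex sets pairwise
intersect exactly in `{v}`. -/
def HasFlower (G : SimpleGraph V) (v : V) (k : ℕ) : Prop :=
  ∃ c : Fin k → G.Walk v v,
    (∀ i, (c i).IsCycle) ∧
    ∀ i j, i ≠ j → {x | x ∈ (c i).support} ∩ {x | x ∈ (c j).support} = {v}

/-- `G` contains `k` pairwise vertex-disjoint cycles. -/
def HasDisjointCycles (G : SimpleGraph V) (k : ℕ) : Prop :=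
  ∃ (b : Fin k → V) (c : ∀ i, G.Walk (b i) (b i)),
    (∀ i, (c i).IsCycle) ∧
    ∀ i j, i ≠ j → Disjoint {x | x ∈ (c i).support} {x | x ∈ (c j).support}

/-- `(C, F)` is a 1-antler in `G` (self-contained definition): `G[F]` is a forest,
every tree of `G[F]` has at most one edge to `V(G) \ (C ∪ F)`, and `G[C ∪ F]`
contains `|C|` pairwise vertex-disjoint cycles. -/
def IsOneAntler (G : SimpleGraph V) (C F : Set V) : Prop :=
  IsFVC G C F ∧ HasDisjointCycles (graphRestrict G (C ∪ F)) C.ncard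

/-- `C 1, F 1, …, C ℓ, F ℓ` is a `z`-antler-sequence for `G`: the sets are pairwise
disjoint and each `(C i, F i)` is a `z`-antler in `G` minus all earlier sets. -/
def IsAntlerSeq (G : SimpleGraph V) (z ℓ : ℕ) (C F : Fin ℓ → Set V) : Prop :=
  (∀ i j, i ≠ j → Disjoint (C i) (C j)) ∧
  (∀ i j, i ≠ j → Disjoint (F i) (F j)) ∧
  (∀ i j, Disjoint (C i) (F j)) ∧
  ∀ i, IsZAntler (graphRestrict G (⋃ j, ⋃ (_ : j < i), (C j ∪ F j))ᶜ) z (C i) (F i)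


/-! A minimum feedback vertex set `X` of `G` splits into `X ∩ (C ∪ F)`, which is a feedback vertex
set of `G[C ∪ F]` and so has at least `|C|` elements by the antler condition, and `X \ (C ∪ F)`, a
feedback vertex set of `G - (C ∪ F)`. Conversely, `C` together with a minimum feedback vertex set
`Y` of `G - (C ∪ F)` is a feedback vertex set of `G`: after deleting `C ∪ Y`, what remains is the
forest `G[F]` and a forest outside `F`, and every tree of `G[F]` is attached to the outside by at
most one edge, so no cycle can pass through both parts. -/

open SimpleGraph

section GraphRestrict

variable {G H : SimpleGraph V} {S T : Set V}

lemma graphRestrict_le (G : SimpleGraph V) (S : Set V) : graphRestrict G S ≤ G :=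
  fun _ _ h => h.1

lemma graphRestrict_mono (hGH : G ≤ H) (hST : S ⊆ T) : graphRestrict G S ≤ graphRestrict H T :=
  fun _ _ h => ⟨hGH h.1, hST h.2.1, hST h.2.2⟩

lemma graphRestrict_graphRestrict (G : SimpleGraph V) (S T : Set V) :
    graphRestrict (graphRestrict G S) T = graphRestrict G (S ∩ T) := by
  ext u v
  simp only [graphRestrict, Set.mem_inter_iff]
  tauto

lemma mem_of_reachable_graphRestrict {u v : V} (hu : u ∈ S)
    (h : (graphRestrict G S).Reachable u v) : v ∈ S := by
  obtain ⟨p⟩ := h.symm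
  cases p with
  | nil => exact hu
  | cons hadj _ => exact hadj.2.1

lemma SimpleGraph.Walk.edges_subset_edgeSet_graphRestrict {u v : V} (p : G.Walk u v)
    (hp : ∀ z ∈ p.support, z ∈ S) : ∀ e ∈ p.edges, e ∈ (graphRestrict G S).edgeSet := by
  intro e he
  induction e using Sym2.ind with
  | _ a b =>
    exact ⟨p.adj_of_mem_edges he, hp a (p.fst_mem_support_of_mem_edges he),
      hp b (p.snd_mem_support_of_mem_edges he)⟩

lemma SimpleGraph.Walk.exists_dart_leaving_component {x u w : V} (p : G.Walk u w) (hx : x ∈ S)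
    (hu : (graphRestrict G S).Reachable x u) (hw : w ∉ S) :
    ∃ d ∈ p.darts, d.fst ∈ S ∧ d.snd ∉ S ∧ (graphRestrict G S).Reachable x d.fst := by
  obtain ⟨d, hd, hfst, hsnd⟩ := p.exists_boundary_dart {z | (graphRestrict G S).Reachable x z} hu
    (fun h => hw (mem_of_reachable_graphRestrict hx h))
  have hfstS : d.fst ∈ S := mem_of_reachable_graphRestrict hx hfst
  refine ⟨d, hd, hfstS, fun hsndS => hsnd ?_, hfst⟩
  exact hfst.trans (Adj.reachable ⟨d.adj, hfstS, hsndS⟩)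

/-- A cycle meeting both `S` and `Sᶜ`, based in `S`, leaves the component of its base point in
`H[S]` once on the way to a vertex outside `S` and once on the way back; uniqueness of the
crossing edge makes these the same edge, which a cycle cannot traverse twice. -/
theorem isAcyclic_of_isAcyclic_graphRestrict_of_unique_crossing
    (hS : (graphRestrict H S).IsAcyclic) (hSc : (graphRestrict H Sᶜ).IsAcyclic)
    (hcross : ∀ u₁ u₂ w₁ w₂, u₁ ∈ S → u₂ ∈ S → (graphRestrict H S).Reachable u₁ u₂ →
      w₁ ∉ S → w₂ ∉ S → H.Adj u₁ w₁ → H.Adj u₂ w₂ → u₁ = u₂ ∧ w₁ = w₂) :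
    H.IsAcyclic := by
  intro v c hc
  by_cases hin : ∀ z ∈ c.support, z ∈ S
  · exact hS _ (hc.transfer (c.edges_subset_edgeSet_graphRestrict hin))
  by_cases hout : ∀ z ∈ c.support, z ∈ Sᶜ
  · exact hSc _ (hc.transfer (c.edges_subset_edgeSet_graphRestrict hout))
  push Not at hin hout
  obtain ⟨y, hy, hyS⟩ := hin
  obtain ⟨x, hx, hxS⟩ := hout
  rw [Set.notMem_compl_iff] at hxS
  classical
  set c' := c.rotate x hx
  have hy' : y ∈ c'.support := (c.mem_support_rotate_iff x hx).2 hy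
  obtain ⟨d₁, hd₁, hd₁S, hd₁S', hd₁x⟩ :=
    (c'.takeUntil y hy').exists_dart_leaving_component hxS .rfl hyS
  obtain ⟨d₂, hd₂, hd₂S, hd₂S', hd₂x⟩ :=
    (c'.dropUntil y hy').reverse.exists_dart_leaving_component hxS .rfl hyS
  obtain ⟨hfst, hsnd⟩ := hcross _ _ _ _ hd₁S hd₂S (hd₁x.symm.trans hd₂x) hd₁S' hd₂S' d₁.adj d₂.adj
  have hd : d₁ = d₂ := Dart.ext _ _ (Prod.ext hfst hsnd)
  subst hd
  have hsplit := congrArg Walk.edges (c'.take_spec hy')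
  rw [Walk.edges_append] at hsplit
  have hnd := (hc.rotate hx).edges_nodup
  rw [← hsplit] at hnd
  have hd₂' : d₁.edge ∈ (c'.dropUntil y hy').reverse.edges := List.mem_map_of_mem hd₂
  rw [Walk.edges_reverse, List.mem_reverse] at hd₂'
  exact List.disjoint_of_nodup_append hnd (List.mem_map_of_mem hd₁) hd₂'

end GraphRestrict

section FVS

variable {G : SimpleGraph V} {C F X Y : Set V}

lemma IsFVS.inter (hX : IsFVS G X) (S : Set V) : IsFVS (graphRestrict G S) (X ∩ S) := by
  unfold IsFVS
  rw [graphRestrict_graphRestrict]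
  exact hX.anti (graphRestrict_mono le_rfl fun v hv hvX => hv.2 ⟨hvX, hv.1⟩)

lemma fvs_le_ncard (h : IsFVS G X) : fvs G ≤ X.ncard :=
  Nat.sInf_le ⟨X, h, rfl⟩

lemma exists_isFVS_ncard_eq_fvs (G : SimpleGraph V) : ∃ X, IsFVS G X ∧ X.ncard = fvs G := by
  have huniv : IsFVS G Set.univ := isAcyclic_bot.anti fun _ _ h => (h.2.1 (Set.mem_univ _)).elim
  exact Nat.sInf_mem (s := {n | ∃ X : Set V, IsFVS G X ∧ X.ncard = n}) ⟨_, Set.univ, huniv, rfl⟩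

lemma fvs_graphRestrict_add_fvs_graphRestrict_compl_le [Finite V] (G : SimpleGraph V)
    (S : Set V) : fvs (graphRestrict G S) + fvs (graphRestrict G Sᶜ) ≤ fvs G := by
  obtain ⟨X, hX, hXcard⟩ := exists_isFVS_ncard_eq_fvs G
  calc fvs (graphRestrict G S) + fvs (graphRestrict G Sᶜ)
      ≤ (X ∩ S).ncard + (X ∩ Sᶜ).ncard :=
        Nat.add_le_add (fvs_le_ncard (hX.inter S)) (fvs_le_ncard (hX.inter Sᶜ))
    _ = fvs G := by rw [← Set.sdiff_eq, Set.ncard_inter_add_ncard_sdiff_eq_ncard, hXcard]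

lemma IsFVC.isFVS_union (hCF : IsFVC G C F) (hY : IsFVS (graphRestrict G (C ∪ F)ᶜ) Y) :
    IsFVS G (C ∪ Y) := by
  obtain ⟨-, hF, hcross⟩ := hCF
  have hle : graphRestrict (graphRestrict G (C ∪ Y)ᶜ) F ≤ graphRestrict G F :=
    graphRestrict_mono (graphRestrict_le _ _) subset_rfl
  refine isAcyclic_of_isAcyclic_graphRestrict_of_unique_crossing (S := F) (hF.anti hle) ?_ ?_
  · unfold IsFVS at hY
    rw [graphRestrict_graphRestrict] at hY ⊢
    exact hY.anti (graphRestrict_mono le_rfl fun v hv => by simp_all)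
  · intro u₁ u₂ w₁ w₂ hu₁ hu₂ hr hw₁ hw₂ h₁ h₂
    refine hcross u₁ u₂ w₁ w₂ hu₁ hu₂ (hr.mono hle) ?_ ?_ h₁.1 h₂.1
    · exact fun hw => hw.elim (fun hC => h₁.2.2 (.inl hC)) hw₁
    · exact fun hw => hw.elim (fun hC => h₂.2.2 (.inl hC)) hw₂

lemma IsFVC.fvs_le (hCF : IsFVC G C F) :
    fvs G ≤ C.ncard + fvs (graphRestrict G (C ∪ F)ᶜ) := by
  obtain ⟨Y, hY, hYcard⟩ := exists_isFVS_ncard_eq_fvs (graphRestrict G (C ∪ F)ᶜ)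
  calc fvs G ≤ (C ∪ Y).ncard := fvs_le_ncard (hCF.isFVS_union hY)
    _ ≤ C.ncard + Y.ncard := Set.ncard_union_le C Y
    _ = C.ncard + fvs (graphRestrict G (C ∪ F)ᶜ) := by rw [hYcard]

end FVS

theorem stmt1 [Fintype V] (G : SimpleGraph V) (C F : Set V) (h : IsAntler G C F) :
    fvs G = C.ncard + fvs (graphRestrict G (C ∪ F)ᶜ) := by
  refine le_antisymm h.1.fvs_le ?_
  calc C.ncard + fvs (graphRestrict G (C ∪ F)ᶜ)
      ≤ fvs (graphRestrict G (C ∪ F)) + fvs (graphRestrict G (C ∪ F)ᶜ) :=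
        Nat.add_le_add_right h.2 _
    _ ≤ fvs G := fvs_graphRestrict_add_fvs_graphRestrict_compl_le G (C ∪ F)
end

section
/- Let G be a finite simple graph in which every vertex has degree at least 3, and let (C,F) be a feedback vertex cut in G. Then |F| ≤ e(C,F), where e(C,F) denotes the number of edges of G with one endpoint in C and the other endpoint in F. -/
variable {V : Type*}

/-!
Summing degrees over `F` gives `3|F| ≤ 2 e(G[F]) + e(F, C) + e(F, V \ (C ∪ F))`. The forest `G[F]`
with `k` components has at most `|F| - k` edges, and each of its trees sends at most one edge out
of `C ∪ F`, so `2 e(G[F]) + e(F, V \ (C ∪ F)) ≤ 2|F| - k`.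

The forest bound comes from rooting every component and sending each dart to its endpoint farther
from the root, tagged with the dart's direction: this is injective and never hits a root.
-/

theorem Set.mul_ncard_le_ncard_of_forall_le_ncard {α β : Type*} [Finite α] [Finite β] {s : Set α}
    {r : α → β → Prop} {k : ℕ} (h : ∀ a ∈ s, k ≤ {b | r a b}.ncard) :
    k * s.ncard ≤ {p : α × β | p.1 ∈ s ∧ r p.1 p.2}.ncard := by
  have : Fintype s := Fintype.ofFinite s
  let e : {p : α × β | p.1 ∈ s ∧ r p.1 p.2} ≃ Σ a : s, {b | r a b} :=
    { toFun p := ⟨⟨p.1.1, p.2.1⟩, ⟨p.1.2, p.2.2⟩⟩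
      invFun x := ⟨(x.1, x.2), x.1.2, x.2.2⟩ }
  calc k * s.ncard = ∑ _a : s, k := by
        rw [Finset.sum_const, Finset.card_univ, ← Nat.card_eq_fintype_card, Nat.card_coe_set_eq,
          smul_eq_mul, mul_comm]
    _ ≤ ∑ a : s, {b | r a b}.ncard := Finset.sum_le_sum fun a _ => h a a.2
    _ = _ := by rw [← Nat.card_coe_set_eq, Nat.card_congr e, Nat.card_sigma]; rfl

namespace SimpleGraph

variable {H : SimpleGraph V}

theorem IsAcyclic.eq_of_adj_of_dist_eq_dist_add_one (hH : H.IsAcyclic) {x v w₁ w₂ : V}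
    (hx : H.Reachable x v) (h₁ : H.Adj v w₁) (h₂ : H.Adj v w₂)
    (hd₁ : H.dist x v = H.dist x w₁ + 1) (hd₂ : H.dist x v = H.dist x w₂ + 1) : w₁ = w₂ := by
  classical
  obtain ⟨q, hq, hqlen⟩ := hx.exists_path_of_dist
  suffices ∀ w, H.Adj v w → H.dist x v = H.dist x w + 1 → w = q.penultimate by
    rw [this w₁ h₁ hd₁, this w₂ h₂ hd₂]
  intro w hw hdw
  obtain ⟨p, hp, hplen⟩ := (hx.trans hw.reachable).exists_path_of_dist
  have hv : v ∉ p.support := fun hv => by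
    have := (dist_le (p.takeUntil v hv)).trans (p.length_takeUntil_le_length hv)
    omega
  exact hH.eq_penultimate_of_adj_end hq hw
    (hH.mem_support_of_ne_mem_support_of_adj_of_isPath hq hp hw hv)

/-- `d` points from a vertex to its parent once every component of `H` is rooted at its chosen
representative. -/
def Dart.PointsToRoot (d : H.Dart) : Prop :=
  H.dist (H.connectedComponentMk d.fst).out d.fst =
    H.dist (H.connectedComponentMk d.fst).out d.snd + 1

theorem IsAcyclic.pointsToRoot_or_pointsToRoot_symm (hH : H.IsAcyclic) (d : H.Dart) :
    d.PointsToRoot ∨ d.symm.PointsToRoot := by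
  have hroot : H.connectedComponentMk d.snd = H.connectedComponentMk d.fst :=
    (ConnectedComponent.connectedComponentMk_eq_of_adj d.adj).symm
  simp only [Dart.PointsToRoot, Dart.symm_toProd, Prod.fst_swap, Prod.snd_swap, hroot]
  exact hH.dist_eq_dist_add_one_of_adj_of_reachable _ d.adj
    (ConnectedComponent.exact (Quot.out_eq _))

theorem IsAcyclic.injOn_fst_pointsToRoot (hH : H.IsAcyclic) :
    Set.InjOn (fun d : H.Dart => d.fst) {d | d.PointsToRoot} := by
  intro d hd d' hd' (hfst : d.fst = d'.fst)
  refine Dart.ext _ _ (Prod.ext hfst ?_)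
  rw [Set.mem_ofPred_eq, Dart.PointsToRoot, hfst] at hd
  exact hH.eq_of_adj_of_dist_eq_dist_add_one (ConnectedComponent.exact (Quot.out_eq _))
    (hfst ▸ d.adj) d'.adj hd hd'

theorem Dart.PointsToRoot.fst_ne_out {d : H.Dart} (hd : d.PointsToRoot)
    (c : H.ConnectedComponent) : d.fst ≠ c.out := by
  intro hc
  have hroot : (H.connectedComponentMk d.fst).out = d.fst := by
    rw [hc]
    exact congrArg Quot.out c.out_eq
  simp [Dart.PointsToRoot, hroot] at hd

theorem IsAcyclic.card_dart_add_two_mul_card_connectedComponent_le [Finite V]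
    (hH : H.IsAcyclic) : Nat.card H.Dart + 2 * Nat.card H.ConnectedComponent ≤ 2 * Nat.card V := by
  classical
  have : Finite H.Dart := .of_injective _ Dart.ext
  let child (d : H.Dart) : V × Bool :=
    if d.PointsToRoot then (d.fst, true) else (d.symm.fst, false)
  have hchild : Function.Injective child := by
    intro d d' h
    by_cases hd : d.PointsToRoot <;> by_cases hd' : d'.PointsToRoot <;>
      simp only [child, hd, hd', if_true, if_false] at h
    · exact hH.injOn_fst_pointsToRoot hd hd' (Prod.ext_iff.mp h).1
    · simp at h
    · simp at h
    · exact Dart.symm_involutive.injective <| hH.injOn_fst_pointsToRoot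
        ((hH.pointsToRoot_or_pointsToRoot_symm d).resolve_left hd)
        ((hH.pointsToRoot_or_pointsToRoot_symm d').resolve_left hd') (Prod.ext_iff.mp h).1
  have hroot (d : H.Dart) (c : H.ConnectedComponent × Bool) : child d ≠ (c.1.out, c.2) := by
    intro h
    by_cases hd : d.PointsToRoot <;> simp only [child, hd, if_true, if_false] at h
    · exact hd.fst_ne_out c.1 (Prod.ext_iff.mp h).1
    · exact ((hH.pointsToRoot_or_pointsToRoot_symm d).resolve_left hd).fst_ne_out c.1
        (Prod.ext_iff.mp h).1
  have hout : Function.Injective fun c : H.ConnectedComponent => c.out :=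
    Function.LeftInverse.injective Quot.out_eq
  have := Nat.card_le_card_of_injective _
    (hchild.sumElim (hout.prodMap Function.injective_id) hroot)
  simp only [Nat.card_sum, Nat.card_prod, Nat.card_eq_fintype_card (α := Bool),
    Fintype.card_bool] at this
  omega

theorem natCard_induce_dart (G : SimpleGraph V) (S : Set V) :
    Nat.card (G.induce S).Dart = {p : V × V | p.1 ∈ S ∧ p.2 ∈ S ∧ G.Adj p.1 p.2}.ncard := by
  rw [← Nat.card_coe_set_eq]
  exact Nat.card_congr
    { toFun d := ⟨(d.fst, d.snd), d.fst.2, d.snd.2, d.adj⟩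
      invFun p := ⟨(⟨p.1.1, p.2.1⟩, ⟨p.1.2, p.2.2.1⟩), p.2.2.2⟩ }

end SimpleGraph

def induceToGraphRestrict (G : SimpleGraph V) (S : Set V) : G.induce S →g graphRestrict G S where
  toFun := Subtype.val
  map_rel' {a b} h := ⟨h, a.2, b.2⟩

theorem IsFVC.isAcyclic_induce {G : SimpleGraph V} {C F : Set V} (h : IsFVC G C F) :
    (G.induce F).IsAcyclic :=
  h.2.1.comap (induceToGraphRestrict G F) Subtype.val_injective

theorem IsFVC.ncard_adj_outside_le_card_connectedComponent [Finite V] {G : SimpleGraph V}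
    {C F : Set V} (h : IsFVC G C F) :
    {p : V × V | p.1 ∈ F ∧ p.2 ∉ C ∪ F ∧ G.Adj p.1 p.2}.ncard ≤
      Nat.card (G.induce F).ConnectedComponent := by
  rw [← Nat.card_coe_set_eq]
  refine Nat.card_le_card_of_injective
    (fun p => (G.induce F).connectedComponentMk ⟨p.1.1, p.2.1⟩) fun p q hpq => ?_
  have hreach := (SimpleGraph.ConnectedComponent.exact hpq).map (induceToGraphRestrict G F)
  obtain ⟨h₁, h₂⟩ := h.2.2 _ _ _ _ p.2.1 q.2.1 hreach p.2.2.1 q.2.2.1 p.2.2.2 q.2.2.2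
  exact Subtype.ext (Prod.ext h₁ h₂)

theorem stmt11 [Fintype V] (G : SimpleGraph V) (C F : Set V)
    (hdeg : ∀ v : V, 3 ≤ {u | G.Adj v u}.ncard) (h : IsFVC G C F) :
    F.ncard ≤ {p : V × V | p.1 ∈ C ∧ p.2 ∈ F ∧ G.Adj p.1 p.2}.ncard := by
  have hdegF : 3 * F.ncard ≤ {p : V × V | p.1 ∈ F ∧ G.Adj p.1 p.2}.ncard :=
    Set.mul_ncard_le_ncard_of_forall_le_ncard fun v _ => hdeg v
  have hsplit : {p : V × V | p.1 ∈ F ∧ G.Adj p.1 p.2}.ncard ≤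
      {p : V × V | p.1 ∈ F ∧ p.2 ∈ F ∧ G.Adj p.1 p.2}.ncard +
      {p : V × V | p.1 ∈ F ∧ p.2 ∈ C ∧ G.Adj p.1 p.2}.ncard +
      {p : V × V | p.1 ∈ F ∧ p.2 ∉ C ∪ F ∧ G.Adj p.1 p.2}.ncard := by
    refine (Set.ncard_le_ncard ?_).trans ((Set.ncard_union_le _ _).trans
      (Nat.add_le_add_right (Set.ncard_union_le _ _) _))
    rintro ⟨a, b⟩ ⟨ha, hab⟩
    simp only [Set.mem_union, Set.mem_ofPred_eq]
    tauto
  have hswap : {p : V × V | p.1 ∈ F ∧ p.2 ∈ C ∧ G.Adj p.1 p.2}.ncard =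
      {p : V × V | p.1 ∈ C ∧ p.2 ∈ F ∧ G.Adj p.1 p.2}.ncard := by
    rw [← Set.ncard_image_of_injective _ Prod.swap_injective, Set.image_swap_eq_preimage_swap]
    congr 1
    ext ⟨a, b⟩
    simp [G.adj_comm, and_left_comm]
  have hforest := h.isAcyclic_induce.card_dart_add_two_mul_card_connectedComponent_le
  rw [G.natCard_induce_dart, Nat.card_coe_set_eq] at hforest
  have hout := h.ncard_adj_outside_le_card_connectedComponent
  omega
end

section
/- Let G be a finite simple graph and let (C,F) be a 1-antler in G. Then for every vertex c ∈ C, the induced subgraph G[{c} ∪ F] contains a cycle. -/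
variable {V : Type*}

/-!
Since `G[F]` is a forest, each of the `|C|` disjoint cycles of `G[C ∪ F]` meets `C`. Picking one
such vertex per cycle is injective by disjointness, hence a bijection onto `C` by counting. So the
cycle through `c` meets `C` in `c` alone and lives in `G[{c} ∪ F]`.
-/

open Function in
theorem Set.exists_inter_eq_singleton_of_pairwise_disjoint {α ι : Type*} {C : Set α}
    (hC : C.Finite) {s : ι → Set α} (hcard : C.ncard ≤ Nat.card ι)
    (hmeet : ∀ i, (s i ∩ C).Nonempty) (hdisj : Pairwise (Disjoint on s)) :
    ∀ c ∈ C, ∃ i, s i ∩ C = {c} := by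
  choose f hf using hmeet
  have hf_inj : f.Injective := fun i j hij =>
    by_contra fun hne => Set.disjoint_left.mp (hdisj hne) (hf i).1 (hij ▸ (hf j).1)
  have hrange : Set.range f = C :=
    Set.eq_of_subset_of_ncard_le (Set.range_subset_iff.mpr fun i => (hf i).2)
      (Set.ncard_range_of_injective hf_inj ▸ hcard) hC
  have hunique : ∀ i, ∀ x ∈ s i ∩ C, x = f i := by
    rintro i x ⟨hxs, hxC⟩
    obtain ⟨j, rfl⟩ := hrange.symm ▸ hxC
    exact congrArg f (not_ne_iff.mp fun hne => Set.disjoint_left.mp (hdisj hne) (hf j).1 hxs)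
  intro c hc
  obtain ⟨i, rfl⟩ := hrange.symm ▸ hc
  exact ⟨i, Set.eq_singleton_iff_unique_mem.mpr ⟨hf i, hunique i⟩⟩

namespace graphRestrict

variable {G : SimpleGraph V} {S T : Set V}

theorem mem_of_mem_support {u v x : V} {w : (graphRestrict G S).Walk u v} (hw : ¬ w.Nil)
    (hx : x ∈ w.support) : x ∈ S := by
  obtain ⟨e, he, hxe⟩ := (SimpleGraph.Walk.mem_support_iff_exists_mem_edges_of_not_nil hw).mp hx
  induction e with
  | h a b =>
    have hab := w.adj_of_mem_edges he
    rcases Sym2.mem_iff.mp hxe with rfl | rfl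
    exacts [hab.2.1, hab.2.2]

theorem exists_isCycle_of_support_subset {u : V} {w : (graphRestrict G S).Walk u u}
    (hw : w.IsCycle) (hT : ∀ x ∈ w.support, x ∈ T) :
    ∃ w' : (graphRestrict G T).Walk u u, w'.IsCycle := by
  refine ⟨w.transfer _ fun e he => ?_, hw.transfer _⟩
  induction e with
  | h a b =>
    exact ⟨(w.adj_of_mem_edges he).1, hT a (w.fst_mem_support_of_mem_edges he),
      hT b (w.snd_mem_support_of_mem_edges he)⟩

theorem exists_mem_support_of_isCycle {C F : Set V} (hF : (graphRestrict G F).IsAcyclic)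
    {u : V} {w : (graphRestrict G (C ∪ F)).Walk u u} (hw : w.IsCycle) :
    ∃ x ∈ w.support, x ∈ C := by
  by_contra! hnone
  obtain ⟨w', hw'⟩ := exists_isCycle_of_support_subset hw fun x hx =>
    (mem_of_mem_support hw.not_nil hx).resolve_left (hnone x hx)
  exact hF w' hw'

end graphRestrict

theorem stmt17 [Fintype V] (G : SimpleGraph V) (C F : Set V)
    (h : IsOneAntler G C F) (c : V) (hc : c ∈ C) :
    ∃ (v : V) (w : (graphRestrict G ({c} ∪ F)).Walk v v), w.IsCycle := by
  obtain ⟨⟨-, hF, -⟩, b, cyc, hcyc, hdisj⟩ := h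
  obtain ⟨i, hi⟩ := Set.exists_inter_eq_singleton_of_pairwise_disjoint (Set.toFinite C)
    (s := fun i => {x | x ∈ (cyc i).support}) (Nat.card_fin _).ge
    (fun i => graphRestrict.exists_mem_support_of_isCycle hF (hcyc i))
    (fun i j hij => hdisj i j hij) c hc
  refine ⟨b i, graphRestrict.exists_isCycle_of_support_subset (hcyc i) fun x hx => ?_⟩
  rcases graphRestrict.mem_of_mem_support (hcyc i).not_nil hx with hxC | hxF
  · exact Or.inl (hi.subset ⟨hx, hxC⟩)
  · exact Or.inr hxF
end
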